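/- arXiv:2509.16451 — 5 statements merged into one kernel-verified Lean document; each statement's English description precedes it below -/
import Mathlib

section
/- Let p be a positive integer, L, U ∈ ℝ^p with L_k ≤ U_k for all k, and consider the box uncertainty set 𝒰 = {u ∈ ℝ^p : L_k ≤ u_k ≤ U_k for all k}. Let a ∈ ℝ^n, b ∈ ℝ, d ∈ ℝ^p, z ∈ ℝ^n, and V ∈ ℝ^{n×p}, defining the affine decision rule x(u) = z + V u. If there exist α, β ∈ ℝ^p with α ≥ 0, β ≥ 0, β − α = Vᵀa − d, and aᵀz + Uᵀβ − Lᵀα ≤ b, then aᵀ x(u) ≤ b + dᵀu for every u ∈ 𝒰. -/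
open Matrix

/-! Splitting the sensitivity `Vᵀa − d = β − α` into nonnegative parts, `β` is paid at the upper
ends `U` of the box and `α` at the lower ends `L`; this is weak LP duality for the inner maximization
of `(Vᵀa − d)ᵀu` over the box. -/

theorem Matrix.sub_dotProduct_le_of_mem_Icc {ι R : Type*} [Fintype ι] [CommRing R]
    [PartialOrder R] [IsOrderedRing R] {L U u α β : ι → R} (hu : u ∈ Set.Icc L U)
    (hα : 0 ≤ α) (hβ : 0 ≤ β) :
    (β - α) ⬝ᵥ u ≤ U ⬝ᵥ β - L ⬝ᵥ α := by
  have upper : β ⬝ᵥ u ≤ U ⬝ᵥ β :=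
    dotProduct_comm β u ▸ dotProduct_le_dotProduct_of_nonneg_right hu.2 hβ
  have lower : L ⬝ᵥ α ≤ α ⬝ᵥ u :=
    dotProduct_comm u α ▸ dotProduct_le_dotProduct_of_nonneg_right hu.1 hα
  rw [sub_dotProduct]
  exact sub_le_sub upper lower

theorem box_robust_counterpart_general {p n : ℕ}
    (L U : Fin p → ℝ)
    (a : Fin n → ℝ) (b : ℝ) (d : Fin p → ℝ)
    (z : Fin n → ℝ) (V : Matrix (Fin n) (Fin p) ℝ)
    (α β : Fin p → ℝ)
    (hα : ∀ k, 0 ≤ α k) (hβ : ∀ k, 0 ≤ β k)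
    (hbal : β - α = Vᵀ *ᵥ a - d)
    (hrc : a ⬝ᵥ z + U ⬝ᵥ β - L ⬝ᵥ α ≤ b) :
    ∀ u : Fin p → ℝ, (∀ k, L k ≤ u k ∧ u k ≤ U k) →
      a ⬝ᵥ (z + V *ᵥ u) ≤ b + d ⬝ᵥ u := by
  intro u hu
  have hbox : u ∈ Set.Icc L U := ⟨fun k => (hu k).1, fun k => (hu k).2⟩
  calc a ⬝ᵥ (z + V *ᵥ u) = a ⬝ᵥ z + (β - α) ⬝ᵥ u + d ⬝ᵥ u := by
        rw [dotProduct_add, dotProduct_mulVec, ← mulVec_transpose, hbal, sub_dotProduct,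
          add_assoc, sub_add_cancel]
    _ ≤ a ⬝ᵥ z + (U ⬝ᵥ β - L ⬝ᵥ α) + d ⬝ᵥ u := by
        gcongr
        exact sub_dotProduct_le_of_mem_Icc hbox hα hβ
    _ ≤ b + d ⬝ᵥ u := by
        gcongr
        linarith

/-- **Bounded support (box) robust counterpart.** If `α, β ≥ 0`, `β − α = Vᵀa − d`, and
`aᵀz + Uᵀβ − Lᵀα ≤ b`, then the affine decision rule `x(u) = z + V u` satisfies
`aᵀ x(u) ≤ b + dᵀ u` for all `u` in the box `{u : L ≤ u ≤ U}`. -/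
theorem box_robust_counterpart {p n : ℕ} (hp : 0 < p)
    (L U : Fin p → ℝ) (hLU : ∀ k, L k ≤ U k)
    (a : Fin n → ℝ) (b : ℝ) (d : Fin p → ℝ)
    (z : Fin n → ℝ) (V : Matrix (Fin n) (Fin p) ℝ)
    (α β : Fin p → ℝ)
    (hα : ∀ k, 0 ≤ α k) (hβ : ∀ k, 0 ≤ β k)
    (hbal : β - α = Vᵀ *ᵥ a - d)
    (hrc : a ⬝ᵥ z + U ⬝ᵥ β - L ⬝ᵥ α ≤ b) :
    ∀ u : Fin p → ℝ, (∀ k, L k ≤ u k ∧ u k ≤ U k) →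
      a ⬝ᵥ (z + V *ᵥ u) ≤ b + d ⬝ᵥ u :=
  box_robust_counterpart_general L U a b d z V α β hα hβ hbal hrc
end

section
/- Let p be a positive integer, L, U ∈ ℝ^p, a ∈ ℝ^n, b ∈ ℝ, d ∈ ℝ^p, z ∈ ℝ^n, V ∈ ℝ^{n×p}, and let S ⊆ [p] be a set of indices. Consider the semi-bounded uncertainty set 𝒰 = {u ∈ ℝ^p : u_k ≤ U_k for k ∈ S, and L_k ≤ u_k ≤ U_k for k ∉ S} (coordinates in S are unbounded from below). If there exist α, β ∈ ℝ^p with α ≥ 0, β ≥ 0, β − α = Vᵀa − d, α_k = 0 for all k ∈ S, and aᵀz + Uᵀβ − ∑_{k∉S} L_k α_k ≤ b, then aᵀ(z + V u) ≤ b + dᵀu for every u ∈ 𝒰. -/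
open Matrix

/-! By the balance condition `β - α = Vᵀa - d`, `aᵀ(z + V u) - dᵀu = aᵀz + βᵀu - αᵀu`.
Since `β ≥ 0` and `u ≤ U`, `βᵀu ≤ Uᵀβ`; since `α ≥ 0` vanishes on `S` and `u ≥ L` off `S`,
`αᵀu ≥ ∑_{k∉S} L_k α_k`. These two weak-duality bounds and the robust-counterpart inequality
give the robust constraint. -/

theorem sum_compl_mul_le_dotProduct {ι R : Type*} [Fintype ι] [DecidableEq ι]
    [CommSemiring R] [PartialOrder R] [IsOrderedRing R]
    {S : Finset ι} {L u α : ι → R} (hα : 0 ≤ α) (hαS : ∀ k ∈ S, α k = 0)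
    (hLu : ∀ k ∉ S, L k ≤ u k) :
    ∑ k ∈ Sᶜ, L k * α k ≤ α ⬝ᵥ u := by
  have hsupp : α ⬝ᵥ u = ∑ k ∈ Sᶜ, α k * u k :=
    (Finset.sum_subset (Finset.subset_univ Sᶜ) fun k _ hk => by
      rw [hαS k (by simpa using hk), zero_mul]).symm
  rw [hsupp]
  refine Finset.sum_le_sum fun k hk => ?_
  rw [mul_comm]
  exact mul_le_mul_of_nonneg_left (hLu k (Finset.mem_compl.mp hk)) (hα k)

theorem semibounded_robust_counterpart_general {p n : ℕ}
    (L U : Fin p → ℝ)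
    (a : Fin n → ℝ) (b : ℝ) (d : Fin p → ℝ)
    (z : Fin n → ℝ) (V : Matrix (Fin n) (Fin p) ℝ)
    (S : Finset (Fin p))
    (α β : Fin p → ℝ)
    (hα : ∀ k, 0 ≤ α k) (hβ : ∀ k, 0 ≤ β k)
    (hbal : β - α = Vᵀ *ᵥ a - d)
    (hαS : ∀ k ∈ S, α k = 0)
    (hrc : a ⬝ᵥ z + U ⬝ᵥ β - ∑ k ∈ Sᶜ, L k * α k ≤ b) :
    ∀ u : Fin p → ℝ,
      (∀ k ∈ S, u k ≤ U k) → (∀ k ∉ S, L k ≤ u k ∧ u k ≤ U k) →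
      a ⬝ᵥ (z + V *ᵥ u) ≤ b + d ⬝ᵥ u := by
  intro u hS hSc
  have hu : u ≤ U := fun k => if hk : k ∈ S then hS k hk else (hSc k hk).2
  have hslack : a ⬝ᵥ (V *ᵥ u) = d ⬝ᵥ u + β ⬝ᵥ u - α ⬝ᵥ u := by
    rw [dotProduct_mulVec, ← mulVec_transpose, eq_add_of_sub_eq' hbal.symm, add_dotProduct,
      sub_dotProduct, add_sub_assoc]
  have hupper : β ⬝ᵥ u ≤ U ⬝ᵥ β :=
    dotProduct_comm β U ▸ dotProduct_le_dotProduct_of_nonneg_left hu hβ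
  have hlower : ∑ k ∈ Sᶜ, L k * α k ≤ α ⬝ᵥ u :=
    sum_compl_mul_le_dotProduct hα hαS fun k hk => (hSc k hk).1
  rw [dotProduct_add, hslack]
  linarith

/-- **Semi-bounded support robust counterpart.** Coordinates `k ∈ S` are unbounded from
below (only `u_k ≤ U_k`), the rest satisfy `L_k ≤ u_k ≤ U_k`. If `α, β ≥ 0`,
`β − α = Vᵀa − d`, `α_k = 0` for `k ∈ S`, and `aᵀz + Uᵀβ − ∑_{k∉S} L_k α_k ≤ b`, then
`aᵀ(z + V u) ≤ b + dᵀu` for all `u` in the semi-bounded set. -/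
theorem semibounded_robust_counterpart {p n : ℕ} (hp : 0 < p)
    (L U : Fin p → ℝ)
    (a : Fin n → ℝ) (b : ℝ) (d : Fin p → ℝ)
    (z : Fin n → ℝ) (V : Matrix (Fin n) (Fin p) ℝ)
    (S : Finset (Fin p))
    (α β : Fin p → ℝ)
    (hα : ∀ k, 0 ≤ α k) (hβ : ∀ k, 0 ≤ β k)
    (hbal : β - α = Vᵀ *ᵥ a - d)
    (hαS : ∀ k ∈ S, α k = 0)
    (hrc : a ⬝ᵥ z + U ⬝ᵥ β - ∑ k ∈ Sᶜ, L k * α k ≤ b) :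
    ∀ u : Fin p → ℝ,
      (∀ k ∈ S, u k ≤ U k) → (∀ k ∉ S, L k ≤ u k ∧ u k ≤ U k) →
      a ⬝ᵥ (z + V *ᵥ u) ≤ b + d ⬝ᵥ u :=
  semibounded_robust_counterpart_general L U a b d z V S α β hα hβ hbal hαS hrc
end

section
/- Let u₁, …, u_p be independent real-valued random variables, each with mean zero and taking values in [−1, 1] almost surely. Let a ∈ ℝ^n, b ∈ ℝ, d ∈ ℝ^p, z ∈ ℝ^n, V ∈ ℝ^{n×p}, and ρ > 0. If the ball robust counterpart aᵀz + ρ‖Vᵀa − d‖₂ ≤ b holds, then ℙ[aᵀ(z + V u) ≤ b + dᵀu] ≥ 1 − exp(−ρ²/2). -/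
open Matrix MeasureTheory ProbabilityTheory
open scoped NNReal

/-!
With `w = Vᵀa - d`, the constraint is violated exactly when `aᵀz + wᵀu > b`, which by the robust
counterpart forces `wᵀu > ρ‖w‖₂`. By Hoeffding's lemma each `uₖ` is sub-Gaussian with variance
proxy `1`, so by independence `wᵀu` is sub-Gaussian with variance proxy `‖w‖₂²`, and the Chernoff
bound gives `ℙ[wᵀu > ρ‖w‖₂] ≤ exp(−ρ²/2)`.
-/

lemma Matrix.dotProduct_add_mulVec_sub_dotProduct {m n R : Type*} [Fintype m] [Fintype n]
    [CommRing R] (a z : m → R) (V : Matrix m n R) (d x : n → R) :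
    a ⬝ᵥ (z + V *ᵥ x) - d ⬝ᵥ x = a ⬝ᵥ z + (Vᵀ *ᵥ a - d) ⬝ᵥ x := by
  rw [dotProduct_add, dotProduct_mulVec, mulVec_transpose, sub_dotProduct]
  ring

lemma MeasureTheory.ofReal_one_sub_le_measure {Ω : Type*} [MeasurableSpace Ω] {μ : Measure Ω}
    [IsProbabilityMeasure μ] {s : Set Ω} {δ : ℝ} (h : μ.real sᶜ ≤ δ) :
    ENNReal.ofReal (1 - δ) ≤ μ s := by
  calc ENNReal.ofReal (1 - δ) ≤ ENNReal.ofReal (1 - μ.real sᶜ) := by gcongr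
    _ = 1 - μ sᶜ := by
      rw [ENNReal.ofReal_sub _ measureReal_nonneg, ENNReal.ofReal_one, ofReal_measureReal]
    _ ≤ μ s := by
      rw [tsub_le_iff_right, ← measure_univ (μ := μ)]
      exact measure_univ_le_add_compl s

namespace ProbabilityTheory.HasSubgaussianMGF

variable {Ω : Type*} [MeasurableSpace Ω] {μ : Measure Ω}

lemma of_mem_Icc_neg_one_one_of_integral_eq_zero [IsProbabilityMeasure μ] {X : Ω → ℝ}
    (hm : AEMeasurable X μ) (hb : ∀ᵐ ω ∂μ, X ω ∈ Set.Icc (-1) 1) (hc : μ[X] = 0) :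
    HasSubgaussianMGF X 1 μ := by
  convert hasSubgaussianMGF_of_mem_Icc_of_integral_eq_zero hm hb hc
  norm_num

lemma sum_mul_of_iIndepFun {ι : Type*} [Fintype ι] {X : ι → Ω → ℝ} (h_indep : iIndepFun X μ)
    {c : ι → ℝ≥0} (h : ∀ i, HasSubgaussianMGF (X i) (c i) μ) (w : ι → ℝ) :
    HasSubgaussianMGF (fun ω ↦ ∑ i, w i * X i ω) (∑ i, ‖w i‖₊ ^ 2 * c i) μ := by
  refine sum_of_iIndepFun (h_indep.comp (fun i x ↦ w i * x) fun i ↦ measurable_const_mul (w i))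
    fun i _ ↦ ?_
  convert (h i).const_mul (w i) using 2
  · rfl
  · exact Subtype.ext (by simp; rfl)

lemma measureReal_mul_sqrt_lt_le [IsFiniteMeasure μ] {X : Ω → ℝ} {c : ℝ≥0}
    (h : HasSubgaussianMGF X c μ) {ρ : ℝ} (hρ : 0 ≤ ρ) :
    μ.real {ω | ρ * √(c : ℝ) < X ω} ≤ Real.exp (-ρ ^ 2 / 2) := by
  -- For `c = 0` the Chernoff bound degenerates, but then `X = 0` almost everywhere.
  rcases eq_or_ne c 0 with rfl | hc
  · have hnull : μ.real {ω | 0 < X ω} = 0 := by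
      refine measureReal_mono_null (s₂ := {ω | X ω ≠ 0}) (fun ω hω ↦ ne_of_gt hω) ?_
      exact (measureReal_eq_zero_iff).2 (ae_iff.1 (ae_eq_zero_of_hasSubgaussianMGF_zero h))
    simp only [NNReal.coe_zero, Real.sqrt_zero, mul_zero, hnull]
    positivity
  · calc μ.real {ω | ρ * √(c : ℝ) < X ω} ≤ μ.real {ω | ρ * √(c : ℝ) ≤ X ω} :=
          measureReal_mono <| Set.ofPred_subset_ofPred.2 fun _ ↦ le_of_lt
      _ ≤ Real.exp (-(ρ * √(c : ℝ)) ^ 2 / (2 * c)) := h.measure_ge_le (by positivity)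
      _ = Real.exp (-ρ ^ 2 / 2) := by
          rw [mul_pow, Real.sq_sqrt c.coe_nonneg]
          field_simp

end ProbabilityTheory.HasSubgaussianMGF

/-- **Ball robust counterpart ⇒ distribution-free guarantee.** If `u₁,…,u_p` are
independent, mean-zero, `[−1,1]`-valued random variables and
`aᵀz + ρ‖Vᵀa − d‖₂ ≤ b`, then `ℙ[aᵀ(z + Vu) ≤ b + dᵀu] ≥ 1 − exp(−ρ²/2)`. -/
theorem ball_rc_probabilistic_guarantee {p n : ℕ}
    {Ω : Type*} [MeasurableSpace Ω] (P : Measure Ω) [IsProbabilityMeasure P]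
    (u : Fin p → Ω → ℝ)
    (hmeas : ∀ k, Measurable (u k))
    (hindep : iIndepFun u P)
    (hmean : ∀ k, ∫ ω, u k ω ∂P = 0)
    (hbdd : ∀ k, ∀ᵐ ω ∂P, u k ω ∈ Set.Icc (-1 : ℝ) 1)
    (a : Fin n → ℝ) (b : ℝ) (d : Fin p → ℝ)
    (z : Fin n → ℝ) (V : Matrix (Fin n) (Fin p) ℝ)
    (ρ : ℝ) (hρ : 0 < ρ)
    (hrc : a ⬝ᵥ z + ρ * Real.sqrt (∑ k, (Vᵀ *ᵥ a - d) k ^ 2) ≤ b) :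
    P {ω | a ⬝ᵥ (z + V *ᵥ fun k => u k ω) ≤ b + d ⬝ᵥ fun k => u k ω} ≥
      ENNReal.ofReal (1 - Real.exp (-ρ ^ 2 / 2)) := by
  set w := Vᵀ *ᵥ a - d
  have hsubG := HasSubgaussianMGF.sum_mul_of_iIndepFun hindep (fun k ↦
    .of_mem_Icc_neg_one_one_of_integral_eq_zero (hmeas k).aemeasurable (hbdd k) (hmean k)) w
  have htail := hsubG.measureReal_mul_sqrt_lt_le hρ.le
  simp only [mul_one, NNReal.coe_sum, NNReal.coe_pow, coe_nnnorm, Real.norm_eq_abs, sq_abs]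
    at htail
  refine ofReal_one_sub_le_measure (htail.trans' (measureReal_mono fun ω hω ↦ ?_))
  have hw := dotProduct_add_mulVec_sub_dotProduct a z V d fun k ↦ u k ω
  simp only [Set.mem_compl_iff, Set.mem_ofPred_eq, not_le] at hω
  change ρ * √(∑ k, w k ^ 2) < w ⬝ᵥ fun k ↦ u k ω
  linarith
end

section
/- Let u₁, …, u_p be independent real-valued random variables, each with mean zero and taking values in [−1, 1] almost surely. Let a ∈ ℝ^n, b ∈ ℝ, d ∈ ℝ^p, z ∈ ℝ^n, V ∈ ℝ^{n×p}, and ε ∈ (0, 1). If the ball robust counterpart aᵀz + ρ‖Vᵀa − d‖₂ ≤ b holds with ρ = √(2 ln(1/ε)), then ℙ[aᵀ(z + V u) ≤ b + dᵀu] ≥ 1 − ε. -/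
/-!
With `w = Vᵀa - d` the constraint fails exactly when `aᵀz + ∑ wₖuₖ > b`, which the robust
counterpart forces to lie in the tail `∑ wₖuₖ > ρ‖w‖₂`. By Hoeffding's lemma each `wₖuₖ` is
sub-Gaussian with variance proxy `wₖ²`, so by independence `∑ wₖuₖ` is sub-Gaussian with proxy
`‖w‖₂²`, and the Chernoff bound gives the tail probability `exp(-ρ²/2) = ε`.
-/

open Matrix MeasureTheory ProbabilityTheory

open Real

open scoped NNReal

lemma dotProduct_add_mulVec_le_iff {m n R : Type*} [Fintype m] [Fintype n] [CommRing R]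
    [PartialOrder R] [IsOrderedAddMonoid R] (a z : m → R) (V : Matrix m n R) (b : R)
    (d x : n → R) :
    a ⬝ᵥ (z + V *ᵥ x) ≤ b + d ⬝ᵥ x ↔ a ⬝ᵥ z + (Vᵀ *ᵥ a - d) ⬝ᵥ x ≤ b := by
  rw [dotProduct_add, dotProduct_mulVec, ← mulVec_transpose, sub_dotProduct, ← add_sub_assoc,
    sub_le_iff_le_add]

lemma ofReal_one_sub_le_of_measureReal_compl_le {Ω : Type*} [MeasurableSpace Ω] {P : Measure Ω}
    [IsProbabilityMeasure P] {s : Set Ω} (hs : MeasurableSet s) {ε : ℝ} (h : P.real sᶜ ≤ ε) :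
    ENNReal.ofReal (1 - ε) ≤ P s := by
  rw [← ofReal_measureReal]
  exact ENNReal.ofReal_le_ofReal (by linarith [probReal_compl_eq_one_sub (μ := P) hs])

lemma exp_neg_sq_sqrt_two_log_one_div_mul_sqrt {ε c : ℝ} (hε0 : 0 < ε) (hε1 : ε ≤ 1)
    (hc : 0 < c) :
    exp (-(√(2 * log (1 / ε)) * √c) ^ 2 / (2 * c)) = ε := by
  have hlog : 0 ≤ log (1 / ε) := log_nonneg (one_le_one_div hε0 hε1)
  rw [mul_pow, sq_sqrt (by positivity), sq_sqrt hc.le,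
    show -(2 * log (1 / ε) * c) / (2 * c) = -log (1 / ε) by field_simp,
    exp_neg, exp_log (by positivity), one_div, inv_inv]

section WeightedSum

variable {Ω ι : Type*} [MeasurableSpace Ω] {P : Measure Ω} [IsProbabilityMeasure P] [Fintype ι]
  {u : ι → Ω → ℝ}

lemma hasSubgaussianMGF_sum_mul_of_mem_Icc (hmeas : ∀ i, AEMeasurable (u i) P)
    (hindep : iIndepFun u P) (hmean : ∀ i, ∫ ω, u i ω ∂P = 0)
    (hbdd : ∀ i, ∀ᵐ ω ∂P, u i ω ∈ Set.Icc (-1 : ℝ) 1) (w : ι → ℝ) :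
    HasSubgaussianMGF (fun ω ↦ ∑ i, w i * u i ω) (∑ i, ‖w i‖₊ ^ 2) P := by
  have hindep' : iIndepFun (fun i ω ↦ w i * u i ω) P :=
    hindep.comp (fun i x ↦ w i * x) fun i ↦ measurable_const_mul (w i)
  refine HasSubgaussianMGF.sum_of_iIndepFun hindep' fun i _ ↦ ?_
  have hu := hasSubgaussianMGF_of_mem_Icc_of_integral_eq_zero (hmeas i) (hbdd i) (hmean i)
  have hc : (‖(1 : ℝ) - -1‖₊ / 2) ^ 2 = 1 := by ext; norm_num
  convert hu.const_mul (w i) using 1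
  rw [hc]
  ext
  simp only [NNReal.coe_pow, coe_nnnorm, norm_eq_abs, sq_abs]
  exact (mul_one _).symm

/-- The strict inequality makes the event empty when `w = 0`, where the Chernoff bound
degenerates to the trivial bound `1`. -/
lemma measureReal_sqrt_two_log_mul_lt_sum_mul_le (hmeas : ∀ i, AEMeasurable (u i) P)
    (hindep : iIndepFun u P) (hmean : ∀ i, ∫ ω, u i ω ∂P = 0)
    (hbdd : ∀ i, ∀ᵐ ω ∂P, u i ω ∈ Set.Icc (-1 : ℝ) 1) (w : ι → ℝ) {ε : ℝ} (hε0 : 0 < ε)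
    (hε1 : ε ≤ 1) :
    P.real {ω | √(2 * log (1 / ε)) * √(∑ i, w i ^ 2) < ∑ i, w i * u i ω} ≤ ε := by
  obtain hw | hw := (Finset.sum_nonneg fun i _ ↦ sq_nonneg (w i)).eq_or_lt
  · obtain rfl : w = 0 := by
      have := (Fintype.sum_eq_zero_iff_of_nonneg fun i ↦ sq_nonneg (w i)).1 hw.symm
      exact funext fun i ↦ pow_eq_zero_iff two_ne_zero |>.1 (congrFun this i)
    simp [hε0.le]
  have hc : ((∑ i, ‖w i‖₊ ^ 2 : ℝ≥0) : ℝ) = ∑ i, w i ^ 2 := by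
    push_cast
    simp only [norm_eq_abs, sq_abs]
  calc P.real {ω | √(2 * log (1 / ε)) * √(∑ i, w i ^ 2) < ∑ i, w i * u i ω}
      ≤ P.real {ω | √(2 * log (1 / ε)) * √(∑ i, w i ^ 2) ≤ ∑ i, w i * u i ω} :=
        measureReal_mono (Set.ofPred_subset_ofPred.2 fun _ ↦ le_of_lt)
    _ ≤ exp (-(√(2 * log (1 / ε)) * √(∑ i, w i ^ 2)) ^ 2 / (2 * ∑ i, w i ^ 2)) := by
        rw [← hc]
        exact (hasSubgaussianMGF_sum_mul_of_mem_Icc hmeas hindep hmean hbdd w).measure_ge_le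
          (by positivity)
    _ = ε := exp_neg_sq_sqrt_two_log_one_div_mul_sqrt hε0 hε1 hw

end WeightedSum

/-- **Calibrated ball robust counterpart.** If `u₁,…,u_p` are independent, mean-zero,
`[−1,1]`-valued random variables and `aᵀz + ρ‖Vᵀa − d‖₂ ≤ b` holds with
`ρ = √(2 ln(1/ε))`, then `ℙ[aᵀ(z + Vu) ≤ b + dᵀu] ≥ 1 − ε`. -/
theorem ball_rc_epsilon_guarantee {p n : ℕ}
    {Ω : Type*} [MeasurableSpace Ω] (P : Measure Ω) [IsProbabilityMeasure P]
    (u : Fin p → Ω → ℝ)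
    (hmeas : ∀ k, Measurable (u k))
    (hindep : iIndepFun u P)
    (hmean : ∀ k, ∫ ω, u k ω ∂P = 0)
    (hbdd : ∀ k, ∀ᵐ ω ∂P, u k ω ∈ Set.Icc (-1 : ℝ) 1)
    (a : Fin n → ℝ) (b : ℝ) (d : Fin p → ℝ)
    (z : Fin n → ℝ) (V : Matrix (Fin n) (Fin p) ℝ)
    (ε : ℝ) (hε0 : 0 < ε) (hε1 : ε < 1)
    (hrc : a ⬝ᵥ z + Real.sqrt (2 * Real.log (1 / ε)) *
        Real.sqrt (∑ k, (Vᵀ *ᵥ a - d) k ^ 2) ≤ b) :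
    P {ω | a ⬝ᵥ (z + V *ᵥ fun k => u k ω) ≤ b + d ⬝ᵥ fun k => u k ω} ≥
      ENNReal.ofReal (1 - ε) := by
  set w := Vᵀ *ᵥ a - d
  have hevent : {ω | a ⬝ᵥ (z + V *ᵥ fun k => u k ω) ≤ b + d ⬝ᵥ fun k => u k ω} =
      {ω | a ⬝ᵥ z + ∑ k, w k * u k ω ≤ b} :=
    Set.ext fun ω ↦ dotProduct_add_mulVec_le_iff a z V b d _
  rw [hevent]
  refine ofReal_one_sub_le_of_measureReal_compl_le
    (measurableSet_le (by fun_prop) measurable_const) ?_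
  refine (measureReal_mono fun ω hω ↦ ?_).trans <|
    measureReal_sqrt_two_log_mul_lt_sum_mul_le (fun k ↦ (hmeas k).aemeasurable) hindep hmean
      hbdd w hε0 hε1.le
  simp only [Set.mem_compl_iff, Set.mem_ofPred_eq, not_le] at hω ⊢
  linarith
end

section
/- Let u₁, …, u_p be independent real-valued random variables, each with mean zero and taking values in [−1, 1] almost surely. Let a ∈ ℝ^n, b ∈ ℝ, d ∈ ℝ^p, z ∈ ℝ^n, V ∈ ℝ^{n×p}, and Γ > 0. If there exists y ∈ ℝ^p such that the budget robust counterpart aᵀz + Γ‖Vᵀa − d − y‖_∞ + ‖y‖₁ ≤ b holds, then ℙ[aᵀ(z + V u) ≤ b + dᵀu] ≥ 1 − exp(−Γ²/(2p)). -/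
open Matrix MeasureTheory ProbabilityTheory

/-!
Put `w = Vᵀa − d − y`. Since `aᵀ(z + Vu) − dᵀu = aᵀz + wᵀu + yᵀu` and `yᵀu ≤ ‖y‖₁` on the box,
the robust counterpart lets the constraint fail only when `wᵀu > Γ‖w‖_∞`. By Hoeffding's lemma
each `w_k u_k` is sub-Gaussian with variance proxy `w_k²`, so Hoeffding's inequality bounds the
probability of that event by `exp(−Γ²‖w‖_∞² / (2‖w‖₂²)) ≤ exp(−Γ²/(2p))`, as `‖w‖₂² ≤ p‖w‖_∞²`.
-/

section Deterministic

variable {m ι : Type*} [Fintype m] [Fintype ι]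

lemma dotProduct_le_sum_abs_of_abs_le_one {v : ι → ℝ} (hv : ∀ k, |v k| ≤ 1) (y : ι → ℝ) :
    y ⬝ᵥ v ≤ ∑ k, |y k| :=
  Finset.sum_le_sum fun k _ => (le_abs_self _).trans <| by
    rw [abs_mul]
    exact mul_le_of_le_one_right (abs_nonneg _) (hv k)

lemma sum_sq_le_card_mul_norm_sq (w : ι → ℝ) : ∑ k, w k ^ 2 ≤ Fintype.card ι * ‖w‖ ^ 2 :=
  calc ∑ k, w k ^ 2 ≤ ∑ _k : ι, ‖w‖ ^ 2 := Finset.sum_le_sum fun k _ => by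
        rw [← sq_abs, ← Real.norm_eq_abs]
        exact pow_le_pow_left₀ (norm_nonneg _) (norm_le_pi_norm w k) 2
    _ = Fintype.card ι * ‖w‖ ^ 2 := by simp

lemma dotProduct_mulVec_le_of_budget_robust {a z : m → ℝ} {V : Matrix m ι ℝ} {b Γ : ℝ}
    {d y v : ι → ℝ} (hrc : a ⬝ᵥ z + Γ * ‖Vᵀ *ᵥ a - d - y‖ + ∑ k, |y k| ≤ b)
    (hv : ∀ k, |v k| ≤ 1) (hdev : (Vᵀ *ᵥ a - d - y) ⬝ᵥ v ≤ Γ * ‖Vᵀ *ᵥ a - d - y‖) :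
    a ⬝ᵥ (z + V *ᵥ v) ≤ b + d ⬝ᵥ v := by
  have hsplit : a ⬝ᵥ (z + V *ᵥ v) = a ⬝ᵥ z + (Vᵀ *ᵥ a - d - y) ⬝ᵥ v + d ⬝ᵥ v + y ⬝ᵥ v := by
    rw [dotProduct_add, sub_dotProduct, sub_dotProduct, dotProduct_comm (Vᵀ *ᵥ a),
      dotProduct_transpose_mulVec]
    ring
  linarith [dotProduct_le_sum_abs_of_abs_le_one hv y]

end Deterministic

section Probabilistic

variable {Ω ι : Type*} [MeasurableSpace Ω] {μ : Measure Ω} [IsProbabilityMeasure μ]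

lemma hasSubgaussianMGF_one_of_mem_Icc_neg_one_one {X : Ω → ℝ} (hm : AEMeasurable X μ)
    (hb : ∀ᵐ ω ∂μ, X ω ∈ Set.Icc (-1 : ℝ) 1) (hc : μ[X] = 0) : HasSubgaussianMGF X 1 μ := by
  convert hasSubgaussianMGF_of_mem_Icc_of_integral_eq_zero hm hb hc
  ext
  norm_num

variable [Fintype ι] {u : ι → Ω → ℝ}

/-- Hoeffding's inequality for weighted sums of centred `[-1, 1]`-valued variables. -/
lemma measureReal_le_dotProduct_le_exp (hmeas : ∀ k, AEMeasurable (u k) μ) (hindep : iIndepFun u μ)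
    (hmean : ∀ k, μ[u k] = 0) (hbdd : ∀ k, ∀ᵐ ω ∂μ, u k ω ∈ Set.Icc (-1 : ℝ) 1)
    (w : ι → ℝ) {ε : ℝ} (hε : 0 ≤ ε) :
    μ.real {ω | ε ≤ w ⬝ᵥ fun k => u k ω} ≤ Real.exp (-ε ^ 2 / (2 * ∑ k, w k ^ 2)) := by
  have hsubG : ∀ k ∈ Finset.univ, HasSubgaussianMGF (fun ω => w k * u k ω)
      (‖w k‖₊ ^ 2) μ := fun k _ => by
    convert (hasSubgaussianMGF_one_of_mem_Icc_neg_one_one (hmeas k) (hbdd k) (hmean k)).const_mul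
      (w k) using 1
    exact NNReal.eq (show _ = w k ^ 2 * 1 by simp)
  have hindep' : iIndepFun (fun k ω => w k * u k ω) μ :=
    hindep.comp (fun k x => w k * x) fun k => measurable_const_mul _
  simpa [dotProduct, sq_abs] using
    HasSubgaussianMGF.measure_sum_ge_le_of_iIndepFun hindep' hsubG hε

lemma measureReal_norm_mul_lt_dotProduct_le_exp (hmeas : ∀ k, AEMeasurable (u k) μ)
    (hindep : iIndepFun u μ) (hmean : ∀ k, μ[u k] = 0)
    (hbdd : ∀ k, ∀ᵐ ω ∂μ, u k ω ∈ Set.Icc (-1 : ℝ) 1) (w : ι → ℝ) {Γ : ℝ} (hΓ : 0 ≤ Γ) :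
    μ.real {ω | Γ * ‖w‖ < w ⬝ᵥ fun k => u k ω} ≤ Real.exp (-Γ ^ 2 / (2 * Fintype.card ι)) := by
  -- For `w = 0` Hoeffding's bound degenerates to `exp 0`, but the strict event is empty.
  rcases eq_or_ne w 0 with rfl | hw
  · simpa using (Real.exp_pos _).le
  obtain ⟨k, hk⟩ := Function.ne_iff.1 hw
  have hsum : 0 < ∑ k, w k ^ 2 :=
    Finset.sum_pos' (fun k _ => sq_nonneg _) ⟨k, Finset.mem_univ _, sq_pos_of_ne_zero hk⟩
  have hnorm : ‖w‖ ≠ 0 := norm_ne_zero_iff.2 hw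
  calc μ.real {ω | Γ * ‖w‖ < w ⬝ᵥ fun k => u k ω}
      ≤ μ.real {ω | Γ * ‖w‖ ≤ w ⬝ᵥ fun k => u k ω} :=
      measureReal_mono <| Set.ofPred_subset_ofPred.2 fun _ => le_of_lt
    _ ≤ Real.exp (-(Γ * ‖w‖) ^ 2 / (2 * ∑ k, w k ^ 2)) :=
      measureReal_le_dotProduct_le_exp hmeas hindep hmean hbdd w (by positivity)
    _ ≤ Real.exp (-Γ ^ 2 / (2 * Fintype.card ι)) := by
      rw [Real.exp_le_exp, neg_div, neg_div, neg_le_neg_iff]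
      calc Γ ^ 2 / (2 * Fintype.card ι)
          = (Γ * ‖w‖) ^ 2 / (2 * (Fintype.card ι * ‖w‖ ^ 2)) := by field_simp
        _ ≤ (Γ * ‖w‖) ^ 2 / (2 * ∑ k, w k ^ 2) := by
          gcongr
          exact sum_sq_le_card_mul_norm_sq w

end Probabilistic

lemma ofReal_one_sub_le_measure_of_compl_ae_le {Ω : Type*} [MeasurableSpace Ω] {μ : Measure Ω}
    [IsProbabilityMeasure μ] {s t : Set Ω} {e : ℝ} (hst : sᶜ ≤ᵐ[μ] t) (ht : μ.real t ≤ e) :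
    ENNReal.ofReal (1 - e) ≤ μ s := by
  rw [ENNReal.ofReal_le_iff_le_toReal (measure_ne_top _ _)]
  have hcompl : μ.real sᶜ ≤ μ.real t :=
    ENNReal.toReal_mono (measure_ne_top _ _) (measure_mono_ae hst)
  have hunion : 1 ≤ μ.real s + μ.real sᶜ := by
    simpa [Set.union_compl_self, probReal_univ] using measureReal_union_le (μ := μ) s sᶜ
  change 1 - e ≤ μ.real s
  linarith

theorem budget_rc_probabilistic_guarantee_general {p n : ℕ}
    {Ω : Type*} [MeasurableSpace Ω] (P : Measure Ω) [IsProbabilityMeasure P]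
    (u : Fin p → Ω → ℝ)
    (hmeas : ∀ k, Measurable (u k))
    (hindep : iIndepFun u P)
    (hmean : ∀ k, ∫ ω, u k ω ∂P = 0)
    (hbdd : ∀ k, ∀ᵐ ω ∂P, u k ω ∈ Set.Icc (-1 : ℝ) 1)
    (a : Fin n → ℝ) (b : ℝ) (d : Fin p → ℝ)
    (z : Fin n → ℝ) (V : Matrix (Fin n) (Fin p) ℝ)
    (Γ : ℝ) (hΓ : 0 < Γ)
    (y : Fin p → ℝ)
    (hrc : a ⬝ᵥ z + Γ * ‖Vᵀ *ᵥ a - d - y‖ + ∑ k, |y k| ≤ b) :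
    P {ω | a ⬝ᵥ (z + V *ᵥ fun k => u k ω) ≤ b + d ⬝ᵥ fun k => u k ω} ≥
      ENNReal.ofReal (1 - Real.exp (-Γ ^ 2 / (2 * p))) := by
  have hbox : ∀ᵐ ω ∂P, ∀ k, |u k ω| ≤ 1 :=
    ae_all_iff.2 fun k => (hbdd k).mono fun ω hω => abs_le.2 hω
  have hviolation : {ω | a ⬝ᵥ (z + V *ᵥ fun k => u k ω) ≤ b + d ⬝ᵥ fun k => u k ω}ᶜ ≤ᵐ[P]
      {ω | Γ * ‖Vᵀ *ᵥ a - d - y‖ < (Vᵀ *ᵥ a - d - y) ⬝ᵥ fun k => u k ω} := by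
    filter_upwards [hbox] with ω hω hfail
    exact lt_of_not_ge fun hdev => hfail (dotProduct_mulVec_le_of_budget_robust hrc hω hdev)
  have htail := measureReal_norm_mul_lt_dotProduct_le_exp (fun k => (hmeas k).aemeasurable) hindep
    hmean hbdd (Vᵀ *ᵥ a - d - y) hΓ.le
  rw [Fintype.card_fin] at htail
  exact ofReal_one_sub_le_measure_of_compl_ae_le hviolation htail

/-- **Budget robust counterpart ⇒ distribution-free guarantee.** If `u₁,…,u_p` are
independent, mean-zero, `[−1,1]`-valued random variables and there is `y` with
`aᵀz + Γ‖Vᵀa − d − y‖_∞ + ‖y‖₁ ≤ b`, then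
`ℙ[aᵀ(z + Vu) ≤ b + dᵀu] ≥ 1 − exp(−Γ²/(2p))`. -/
theorem budget_rc_probabilistic_guarantee {p n : ℕ} (hp : 0 < p)
    {Ω : Type*} [MeasurableSpace Ω] (P : Measure Ω) [IsProbabilityMeasure P]
    (u : Fin p → Ω → ℝ)
    (hmeas : ∀ k, Measurable (u k))
    (hindep : iIndepFun u P)
    (hmean : ∀ k, ∫ ω, u k ω ∂P = 0)
    (hbdd : ∀ k, ∀ᵐ ω ∂P, u k ω ∈ Set.Icc (-1 : ℝ) 1)
    (a : Fin n → ℝ) (b : ℝ) (d : Fin p → ℝ)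
    (z : Fin n → ℝ) (V : Matrix (Fin n) (Fin p) ℝ)
    (Γ : ℝ) (hΓ : 0 < Γ)
    (y : Fin p → ℝ)
    (hrc : a ⬝ᵥ z + Γ * ‖Vᵀ *ᵥ a - d - y‖ + ∑ k, |y k| ≤ b) :
    P {ω | a ⬝ᵥ (z + V *ᵥ fun k => u k ω) ≤ b + d ⬝ᵥ fun k => u k ω} ≥
      ENNReal.ofReal (1 - Real.exp (-Γ ^ 2 / (2 * p))) :=
  budget_rc_probabilistic_guarantee_general P u hmeas hindep hmean hbdd a b d z V Γ hΓ y hrc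
end
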